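/- arXiv:2506.16179 — 4 statements merged into one kernel-verified Lean document; each statement's English description precedes it below -/
import Mathlib

section
/- Let F be an invertible real n×n matrix, B a real m×n matrix, C a real m×m matrix, and suppose the Schur complement S = −C − B F⁻¹ Bᵀ is invertible. Let 𝓕 = [[F, Bᵀ], [B, −C]] and let P = [[F, Bᵀ], [0, S]] be the block-triangular preconditioner built from the exact blocks. Then 𝓕 · P⁻¹ = [[I, 0], [B F⁻¹, I]], and consequently (𝓕 P⁻¹ − I)² = 0, i.e., the right-preconditioned operator is the identity plus a nilpotent matrix of index at most 2. -/
open Matrix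

/-- With exact blocks, the right-preconditioned saddle-point operator is the
identity plus a nilpotent matrix of index at most 2. -/
theorem exact_block_triangular_preconditioning {n m : ℕ}
    (F : Matrix (Fin n) (Fin n) ℝ) (hF : IsUnit F)
    (B : Matrix (Fin m) (Fin n) ℝ) (C : Matrix (Fin m) (Fin m) ℝ)
    (S : Matrix (Fin m) (Fin m) ℝ) (hS : S = -C - B * F⁻¹ * Bᵀ) (hSu : IsUnit S)
    (𝓕 P : Matrix (Fin n ⊕ Fin m) (Fin n ⊕ Fin m) ℝ)
    (h𝓕 : 𝓕 = Matrix.fromBlocks F Bᵀ B (-C))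
    (hP : P = Matrix.fromBlocks F Bᵀ 0 S) :
    𝓕 * P⁻¹ = Matrix.fromBlocks 1 0 (B * F⁻¹) 1 ∧ (𝓕 * P⁻¹ - 1) ^ 2 = 0 := by
  have hPinv : P⁻¹ = Matrix.fromBlocks F⁻¹ (-(F⁻¹ * Bᵀ * S⁻¹)) 0 S⁻¹ := by
    rw [hP, inv_fromBlocks_zero₂₁_of_isUnit_iff _ _ _ (iff_of_true hF hSu)]
  have hFF : F * F⁻¹ = 1 := mul_nonsing_inv F ((isUnit_iff_isUnit_det F).mp hF)
  have hSS' : S * S⁻¹ = 1 := mul_nonsing_inv S ((isUnit_iff_isUnit_det S).mp hSu)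
  have h12 : F * -(F⁻¹ * Bᵀ * S⁻¹) + Bᵀ * S⁻¹ = 0 := by
    rw [Matrix.mul_neg, ← Matrix.mul_assoc, ← Matrix.mul_assoc, hFF, Matrix.one_mul]
    abel
  have h22 : B * -(F⁻¹ * Bᵀ * S⁻¹) + -C * S⁻¹ = 1 := by
    have h1 : B * (F⁻¹ * Bᵀ * S⁻¹) = (B * F⁻¹ * Bᵀ) * S⁻¹ := by
      simp [Matrix.mul_assoc]
    have h2 : B * F⁻¹ * Bᵀ = -C - S := by rw [hS]; abel
    rw [Matrix.mul_neg, h1, h2, Matrix.sub_mul, hSS']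
    abel
  have key : 𝓕 * P⁻¹ = Matrix.fromBlocks 1 0 (B * F⁻¹) 1 := by
    rw [h𝓕, hPinv, fromBlocks_multiply, hFF, h12, h22]
    simp
  refine ⟨key, ?_⟩
  rw [key]
  have hd : Matrix.fromBlocks (1 : Matrix (Fin n) (Fin n) ℝ) 0 (B * F⁻¹) 1 - 1 =
      Matrix.fromBlocks (0 : Matrix (Fin n) (Fin n) ℝ) (0 : Matrix (Fin n) (Fin m) ℝ) (B * F⁻¹) (0 : Matrix (Fin m) (Fin m) ℝ) := by
    rw [← fromBlocks_one, sub_eq_add_neg, fromBlocks_neg, fromBlocks_add]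
    simp
  rw [hd, sq, fromBlocks_multiply]
  simp
end

section
/- Let M_u, F be invertible real n×n matrices, M_p, F_p invertible real m×m matrices, and B a real m×n matrix. If the discrete PCD commutator vanishes, i.e., (M_p⁻¹ B)(M_u⁻¹ F) = (M_p⁻¹ F_p)(M_p⁻¹ B), then B F⁻¹ Bᵀ = M_p F_p⁻¹ (B M_u⁻¹ Bᵀ); in particular, the negative Schur complement B F⁻¹ Bᵀ is exactly reproduced by the PCD approximation M_p F_p⁻¹ B M_u⁻¹ Bᵀ. -/
open Matrix

/-- If the discrete PCD commutator vanishes, the PCD approximation reproduces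
the negative Schur complement exactly. -/
theorem pcd_commutator_exact {n m : ℕ}
    (Mu F : Matrix (Fin n) (Fin n) ℝ) (hMu : IsUnit Mu) (hF : IsUnit F)
    (Mp Fp : Matrix (Fin m) (Fin m) ℝ) (hMp : IsUnit Mp) (hFp : IsUnit Fp)
    (B : Matrix (Fin m) (Fin n) ℝ)
    (hcomm : (Mp⁻¹ * B) * (Mu⁻¹ * F) = (Mp⁻¹ * Fp) * (Mp⁻¹ * B)) :
    B * F⁻¹ * Bᵀ = Mp * Fp⁻¹ * (B * Mu⁻¹ * Bᵀ) := by
  have dF : IsUnit F.det := (Matrix.isUnit_iff_isUnit_det _).mp hF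
  have dMp : IsUnit Mp.det := (Matrix.isUnit_iff_isUnit_det _).mp hMp
  have dFp : IsUnit Fp.det := (Matrix.isUnit_iff_isUnit_det _).mp hFp
  have h1 : B * Mu⁻¹ * F = Fp * (Mp⁻¹ * B) := by
    have := congrArg (fun X => Mp * X) hcomm
    simp only [← Matrix.mul_assoc] at this
    rw [Matrix.mul_nonsing_inv _ dMp] at this
    simp only [Matrix.one_mul, Matrix.mul_assoc] at this ⊢; exact this
  have h2 : B * F⁻¹ = Mp * Fp⁻¹ * (B * Mu⁻¹) := by
    have := congrArg (fun X => Mp * Fp⁻¹ * X * F⁻¹) h1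
    simp only [← Matrix.mul_assoc] at this
    rw [Matrix.mul_nonsing_inv_cancel_right _ _ dF,
      Matrix.nonsing_inv_mul_cancel_right _ _ dFp,
      Matrix.mul_nonsing_inv _ dMp, Matrix.one_mul] at this
    rw [← this, Matrix.mul_assoc]
  rw [Matrix.mul_assoc B F⁻¹, ← Matrix.mul_assoc (Mp * Fp⁻¹), ← h2, Matrix.mul_assoc]
end

section
/- Let M_u, F be invertible real n×n matrices, M_p, F_p invertible real m×m matrices, and B a real m×n matrix. If the discrete adjoint (LSC) commutator vanishes, i.e., (M_u⁻¹ F)(M_u⁻¹ Bᵀ) = (M_u⁻¹ Bᵀ)(M_p⁻¹ F_p), then B F⁻¹ Bᵀ = (B M_u⁻¹ Bᵀ) F_p⁻¹ M_p. -/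
open Matrix

/-- If the discrete adjoint (LSC) commutator vanishes, the Schur complement
is exactly reproduced. -/
theorem lsc_commutator_exact {n m : ℕ}
    (Mu F : Matrix (Fin n) (Fin n) ℝ) (hMu : IsUnit Mu) (hF : IsUnit F)
    (Mp Fp : Matrix (Fin m) (Fin m) ℝ) (hMp : IsUnit Mp) (hFp : IsUnit Fp)
    (B : Matrix (Fin m) (Fin n) ℝ)
    (hcomm : (Mu⁻¹ * F) * (Mu⁻¹ * Bᵀ) = (Mu⁻¹ * Bᵀ) * (Mp⁻¹ * Fp)) :
    B * F⁻¹ * Bᵀ = (B * Mu⁻¹ * Bᵀ) * Fp⁻¹ * Mp := by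
  have hMud : IsUnit Mu.det := (Matrix.isUnit_iff_isUnit_det Mu).mp hMu
  have hFd : IsUnit F.det := (Matrix.isUnit_iff_isUnit_det F).mp hF
  have hFpd : IsUnit Fp.det := (Matrix.isUnit_iff_isUnit_det Fp).mp hFp
  have h1 : F * (Mu⁻¹ * Bᵀ) = Bᵀ * (Mp⁻¹ * Fp) := by
    have := congrArg (fun X => Mu * X) hcomm
    simpa [Matrix.mul_assoc, ← Matrix.mul_assoc Mu Mu⁻¹,
      Matrix.mul_nonsing_inv _ hMud] using this
  have h2 : Mu⁻¹ * Bᵀ = F⁻¹ * (Bᵀ * (Mp⁻¹ * Fp)) := by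
    have := congrArg (fun X => F⁻¹ * X) h1
    simpa [← Matrix.mul_assoc, Matrix.nonsing_inv_mul _ hFd] using this
  have h3 : Mu⁻¹ * Bᵀ * Fp⁻¹ * Mp = F⁻¹ * Bᵀ * Mp⁻¹ * Fp * Fp⁻¹ * Mp := by
    rw [h2]; simp only [Matrix.mul_assoc]
  have h4 : F⁻¹ * Bᵀ * Mp⁻¹ * Fp * Fp⁻¹ * Mp = F⁻¹ * Bᵀ := by
    rw [Matrix.mul_assoc _ Fp Fp⁻¹, Matrix.mul_nonsing_inv _ hFpd, Matrix.mul_one,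
      Matrix.mul_assoc _ Mp⁻¹ Mp, Matrix.nonsing_inv_mul _ ((Matrix.isUnit_iff_isUnit_det Mp).mp hMp), Matrix.mul_one]
  calc B * F⁻¹ * Bᵀ = B * (F⁻¹ * Bᵀ) := by rw [Matrix.mul_assoc]
    _ = B * (Mu⁻¹ * Bᵀ * Fp⁻¹ * Mp) := by rw [h3, h4]
    _ = (B * Mu⁻¹ * Bᵀ) * Fp⁻¹ * Mp := by simp [Matrix.mul_assoc]
end

section
/- Let M_u be a symmetric positive definite real n×n matrix, M_p a symmetric positive definite real m×m matrix, F a real n×n matrix, and B a real m×n matrix such that B M_u⁻¹ Bᵀ is invertible. Define F_p = M_p (B M_u⁻¹ Bᵀ)⁻¹ (B M_u⁻¹ F M_u⁻¹ Bᵀ). Then for every j ∈ {1, …, m}, the j-th column of F_p is the unique minimizer over x ∈ ℝᵐ of the weighted least-squares functional ‖(M_u⁻¹ F M_u⁻¹ Bᵀ) e_j − (M_u⁻¹ Bᵀ M_p⁻¹) x‖_{M_u}, where ‖v‖_{M_u} = (vᵀ M_u v)^{1/2} and e_j is the j-th standard basis vector of ℝᵐ. -/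
open Matrix

/-!
The LSC columns solve the weighted least-squares problem `min ‖b - A x‖_{M_u}` with
`A = M_u⁻¹ Bᵀ M_p⁻¹` and `b = (M_u⁻¹ F M_u⁻¹ Bᵀ) e_j`. Since `M_u A = Bᵀ M_p⁻¹`, the normal
equations `(M_u A)ᵀ (b - A x) = 0` reduce to `B (b - A x) = 0`, which the formula for `F_p`
satisfies. The residual is then `M_u`-orthogonal to the range of `A`, and uniqueness follows
from Pythagoras because `M_p (B M_u⁻¹ Bᵀ)⁻¹ B` is a left inverse of `A`.
-/

/-- The weighted norm `‖v‖_M = (vᵀ M v)^(1/2)`. -/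
noncomputable def weightedNorm {n : ℕ} (M : Matrix (Fin n) (Fin n) ℝ)
    (v : Fin n → ℝ) : ℝ :=
  Real.sqrt (v ⬝ᵥ (M *ᵥ v))

theorem weightedNorm_lt_weightedNorm_add {n : ℕ} {M : Matrix (Fin n) (Fin n) ℝ}
    (hM : M.PosDef) {r w : Fin n → ℝ} (horth : r ⬝ᵥ (M *ᵥ w) = 0) (hw : w ≠ 0) :
    weightedNorm M r < weightedNorm M (r + w) := by
  have hMT : Mᵀ = M := hM.1.eq
  have horth' : w ⬝ᵥ (M *ᵥ r) = 0 := by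
    rw [dotProduct_mulVec, ← mulVec_transpose, hMT, dotProduct_comm, horth]
  have hpyth : (r + w) ⬝ᵥ (M *ᵥ (r + w)) = r ⬝ᵥ (M *ᵥ r) + w ⬝ᵥ (M *ᵥ w) := by
    rw [mulVec_add, dotProduct_add, add_dotProduct, add_dotProduct, horth, horth']
    ring
  have hr_nonneg : 0 ≤ r ⬝ᵥ (M *ᵥ r) := by simpa using hM.posSemidef.dotProduct_mulVec_nonneg r
  have hw_pos : 0 < w ⬝ᵥ (M *ᵥ w) := by simpa using hM.dotProduct_mulVec_pos hw
  unfold weightedNorm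
  rw [hpyth]
  exact Real.sqrt_lt_sqrt hr_nonneg (by linarith)

theorem weightedNorm_sub_mulVec_lt_of_vecMul_eq_zero {n : ℕ} {ι : Type*} [Fintype ι]
    {M : Matrix (Fin n) (Fin n) ℝ} (hM : M.PosDef) {A : Matrix (Fin n) ι ℝ}
    (hA : Function.Injective A.mulVec) {b : Fin n → ℝ} {x₀ x : ι → ℝ}
    (horth : (b - A *ᵥ x₀) ᵥ* (M * A) = 0) (hx : x ≠ x₀) :
    weightedNorm M (b - A *ᵥ x₀) < weightedNorm M (b - A *ᵥ x) := by
  have hsplit : b - A *ᵥ x = (b - A *ᵥ x₀) + A *ᵥ (x₀ - x) := by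
    rw [mulVec_sub]; abel
  have hw : A *ᵥ (x₀ - x) ≠ 0 := by
    rw [mulVec_sub, sub_ne_zero]
    exact hA.ne hx.symm
  rw [hsplit]
  refine weightedNorm_lt_weightedNorm_add hM ?_ hw
  rw [mulVec_mulVec, dotProduct_mulVec, horth, zero_dotProduct]

section LSC

variable {ι κ : Type*} [Fintype ι] [DecidableEq ι] [Fintype κ] [DecidableEq κ]
  {Mu F : Matrix ι ι ℝ} {Mp : Matrix κ κ ℝ} {B : Matrix κ ι ℝ}

theorem lsc_leftInverse_mul (hMp : IsUnit Mp) (hBB : IsUnit (B * Mu⁻¹ * Bᵀ)) :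
    Mp * (B * Mu⁻¹ * Bᵀ)⁻¹ * B * (Mu⁻¹ * Bᵀ * Mp⁻¹) = 1 := by
  calc Mp * (B * Mu⁻¹ * Bᵀ)⁻¹ * B * (Mu⁻¹ * Bᵀ * Mp⁻¹)
      = Mp * ((B * Mu⁻¹ * Bᵀ)⁻¹ * (B * Mu⁻¹ * Bᵀ)) * Mp⁻¹ := by simp only [Matrix.mul_assoc]
    _ = 1 := by
      rw [nonsing_inv_mul _ ((isUnit_iff_isUnit_det _).mp hBB), Matrix.mul_one,
        mul_nonsing_inv _ ((isUnit_iff_isUnit_det _).mp hMp)]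

theorem lsc_mul_residual_eq_zero (hMp : IsUnit Mp) (hBB : IsUnit (B * Mu⁻¹ * Bᵀ)) :
    B * (Mu⁻¹ * F * Mu⁻¹ * Bᵀ -
      Mu⁻¹ * Bᵀ * Mp⁻¹ * (Mp * (B * Mu⁻¹ * Bᵀ)⁻¹ * (B * Mu⁻¹ * F * Mu⁻¹ * Bᵀ))) = 0 := by
  have hcancel : B * (Mu⁻¹ * Bᵀ * Mp⁻¹ * (Mp * (B * Mu⁻¹ * Bᵀ)⁻¹ * (B * Mu⁻¹ * F * Mu⁻¹ * Bᵀ)))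
      = B * Mu⁻¹ * F * Mu⁻¹ * Bᵀ := by
    calc _ = (B * Mu⁻¹ * Bᵀ) * (Mp⁻¹ * Mp) * (B * Mu⁻¹ * Bᵀ)⁻¹ * (B * Mu⁻¹ * F * Mu⁻¹ * Bᵀ) := by
          simp only [Matrix.mul_assoc]
      _ = _ := by
        rw [nonsing_inv_mul _ ((isUnit_iff_isUnit_det _).mp hMp), Matrix.mul_one,
          mul_nonsing_inv _ ((isUnit_iff_isUnit_det _).mp hBB), Matrix.one_mul]
  rw [Matrix.mul_sub, hcancel, sub_eq_zero]
  simp only [Matrix.mul_assoc]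

end LSC

/-- Each column of the LSC choice of `F_p` is the unique minimizer of the
columnwise weighted least-squares problem for the discrete adjoint commutator. -/
theorem lsc_column_least_squares {n m : ℕ}
    (Mu F : Matrix (Fin n) (Fin n) ℝ) (hMu : Mu.PosDef)
    (Mp : Matrix (Fin m) (Fin m) ℝ) (hMp : Mp.PosDef)
    (B : Matrix (Fin m) (Fin n) ℝ) (hBB : IsUnit (B * Mu⁻¹ * Bᵀ))
    (Fp : Matrix (Fin m) (Fin m) ℝ)
    (hFp : Fp = Mp * (B * Mu⁻¹ * Bᵀ)⁻¹ * (B * Mu⁻¹ * F * Mu⁻¹ * Bᵀ)) :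
    ∀ j : Fin m, ∀ x : Fin m → ℝ, x ≠ (fun i => Fp i j) →
      weightedNorm Mu
          ((Mu⁻¹ * F * Mu⁻¹ * Bᵀ) *ᵥ Pi.single j 1 -
            (Mu⁻¹ * Bᵀ * Mp⁻¹) *ᵥ (fun i => Fp i j)) <
        weightedNorm Mu
          ((Mu⁻¹ * F * Mu⁻¹ * Bᵀ) *ᵥ Pi.single j 1 -
            (Mu⁻¹ * Bᵀ * Mp⁻¹) *ᵥ x) := by
  intro j x hx
  have hinj : Function.Injective (Mu⁻¹ * Bᵀ * Mp⁻¹).mulVec := fun u v huv => by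
    simpa [mulVec_mulVec, lsc_leftInverse_mul hMp.isUnit hBB] using
      congrArg ((Mp * (B * Mu⁻¹ * Bᵀ)⁻¹ * B) *ᵥ ·) huv
  have hcol : (fun i => Fp i j) = Fp *ᵥ Pi.single j 1 := (mulVec_single_one Fp j).symm
  refine weightedNorm_sub_mulVec_lt_of_vecMul_eq_zero hMu hinj ?_ hx
  have hMuA : Mu * (Mu⁻¹ * Bᵀ * Mp⁻¹) = Bᵀ * Mp⁻¹ := by
    rw [Matrix.mul_assoc, mul_nonsing_inv_cancel_left _ _ hMu.det_pos.ne'.isUnit]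
  rw [hMuA, hcol, mulVec_mulVec, ← sub_mulVec, ← vecMul_vecMul, vecMul_transpose,
    mulVec_mulVec, hFp, lsc_mul_residual_eq_zero hMp.isUnit hBB, zero_mulVec, zero_vecMul]
end
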